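/- Let R be the unique formal power series in ℚ[[t]] with zero constant term satisfying t = ∑_{n≥0} (1/(n+1))·C(2n,n)·C(3n,n)·R^{n+1}. Then R satisfies the differential equation R·(27R − 1)·R'' = 6t·(R')³, where R' and R'' denote formal derivatives with respect to t. -/

import Mathlib

/-
Write `Ω(r) = ∑ aₙ r^(n+1)` with `aₙ = C(2n,n) C(3n,n) / (n+1)`, so that `t = Ω(R)`. The ratio
`aₙ₊₁ / aₙ = 3(3n+1)(3n+2) / ((n+1)(n+2))` gives `(n+2)(n+1) aₙ₊₁ = (27n(n+1) + 6) aₙ`, which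
says that `Ω` satisfies the linear equation `r(27r - 1) Ω'' + 6 Ω = 0`. Differentiating
`t = Ω(R)` twice gives `Ω'(R) R' = 1` and `Ω''(R) R'² + Ω'(R) R'' = 0`; eliminating `Ω'(R)` and
`Ω''(R)` with the linear equation evaluated at `R` yields the stated equation for `R`.
-/

open PowerSeries Nat

theorem coeff_subst_of_constantCoeff_zero {A : Type*} [CommRing A] {R : A⟦X⟧}
    (h0 : constantCoeff R = 0) (f : A⟦X⟧) (m : ℕ) :
    coeff m (f.subst R) = ∑ d ∈ Finset.range (m + 1), coeff d f * coeff m (R ^ d) := by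
  rw [coeff_subst' (HasSubst.of_constantCoeff_zero' h0)]
  refine finsum_eq_sum_of_support_subset _ fun d hd => ?_
  simp only [Function.mem_support, Finset.coe_range, Set.mem_Iio] at hd ⊢
  by_contra! hmd
  refine hd ?_
  rw [coeff_of_lt_order m, smul_zero]
  exact lt_of_lt_of_le (by exact_mod_cast hmd) (le_order_pow_of_constantCoeff_eq_zero d h0)

theorem coeff_derivative_derivative {A : Type*} [CommSemiring A] (f : A⟦X⟧) (n : ℕ) :
    coeff n (d⁄dX A (d⁄dX A f)) = coeff (n + 2) f * (n + 2) * (n + 1) := by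
  rw [coeff_derivative, coeff_derivative]
  push_cast
  ring

theorem derivative_derivative_of_subst_eq_X {A : Type*} [CommRing A] {Ω P Q R : A⟦X⟧}
    (hR : HasSubst R) (hΩ : Ω.subst R = X) (hode : P * d⁄dX A (d⁄dX A Ω) + Q * Ω = 0) :
    P.subst R * d⁄dX A (d⁄dX A R) = Q.subst R * X * (d⁄dX A R) ^ 3 := by
  set S := (d⁄dX A Ω).subst R
  set T := (d⁄dX A (d⁄dX A Ω)).subst R
  have hS : S * d⁄dX A R = 1 := by
    rw [← derivative_subst hR, hΩ, derivative_X]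
  have hT : T * (d⁄dX A R) ^ 2 + S * d⁄dX A (d⁄dX A R) = 0 := by
    have h := congrArg (d⁄dX A) hS
    rw [Derivation.leibniz, derivative_subst hR, Derivation.map_one_eq_zero] at h
    linear_combination h
  have hPQ : P.subst R * T + Q.subst R * X = 0 := by
    have h := congrArg (subst R) hode
    rwa [← coe_substAlgHom hR, map_add, map_mul, map_mul, map_zero, coe_substAlgHom, hΩ] at h
  linear_combination (P.subst R * d⁄dX A R) * hT
    - (d⁄dX A R) ^ 3 * hPQ - (P.subst R * d⁄dX A (d⁄dX A R)) * hS

noncomputable def omegaCoeff (n : ℕ) : ℚ :=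
  (1 / (n + 1 : ℚ)) * ((2 * n).choose n : ℚ) * ((3 * n).choose n : ℚ)

theorem omegaCoeff_eq (n : ℕ) : omegaCoeff n = (3 * n)! / ((n ! : ℚ) ^ 3 * (n + 1)) := by
  rw [omegaCoeff, cast_choose ℚ (by omega : n ≤ 2 * n), cast_choose ℚ (by omega : n ≤ 3 * n),
    show 2 * n - n = n by omega, show 3 * n - n = 2 * n by omega]
  field_simp

theorem omegaCoeff_succ (n : ℕ) :
    omegaCoeff (n + 1) * (n + 2) * (n + 1) = omegaCoeff n * (27 * n * (n + 1) + 6) := by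
  rw [omegaCoeff_eq, omegaCoeff_eq, show 3 * (n + 1) = 3 * n + 2 + 1 by omega,
    factorial_succ (3 * n + 2), factorial_succ (3 * n + 1), factorial_succ (3 * n),
    factorial_succ n]
  push_cast
  field_simp
  ring

noncomputable def omegaSeries : ℚ⟦X⟧ := X * mk omegaCoeff

theorem omegaSeries_ode :
    X * (27 * X - 1) * d⁄dX ℚ (d⁄dX ℚ omegaSeries) + 6 * omegaSeries = 0 := by
  suffices h : (27 * X - 1) * d⁄dX ℚ (d⁄dX ℚ omegaSeries) + 6 * mk omegaCoeff = 0 by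
    have hΩ : omegaSeries = X * mk omegaCoeff := rfl
    linear_combination X * h + 6 * hΩ
  rw [show (27 : ℚ⟦X⟧) = C 27 from (map_ofNat C 27).symm,
    show (6 : ℚ⟦X⟧) = C 6 from (map_ofNat C 6).symm]
  ext n
  rw [sub_mul, mul_assoc, map_add, map_sub, one_mul, map_zero]
  rcases n with _ | n
  · simp only [coeff_C_mul, coeff_zero_X_mul, coeff_derivative_derivative, omegaSeries,
      coeff_succ_X_mul, coeff_mk]
    norm_num [omegaCoeff]
  · simp only [coeff_C_mul, coeff_succ_X_mul, coeff_derivative_derivative, omegaSeries, coeff_mk]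
    have h := omegaCoeff_succ (n + 1)
    push_cast at h ⊢
    linear_combination -h

theorem coeff_omegaSeries_subst {R : ℚ⟦X⟧} (h0 : constantCoeff R = 0) (m : ℕ) :
    coeff m (omegaSeries.subst R) = ∑ n ∈ Finset.range m, omegaCoeff n * coeff m (R ^ (n + 1)) := by
  rw [coeff_subst_of_constantCoeff_zero h0, Finset.sum_range_succ']
  simp [omegaSeries, coeff_succ_X_mul]

theorem R_ode_quartic (R : PowerSeries ℚ)
    (h0 : PowerSeries.constantCoeff R = 0)
    (hR : ∀ m : ℕ, PowerSeries.coeff m (PowerSeries.X : PowerSeries ℚ)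
      = ∑ n ∈ Finset.range m,
          (1 / (n + 1 : ℚ)) * ((2 * n).choose n : ℚ) * ((3 * n).choose n : ℚ)
            * PowerSeries.coeff m (R ^ (n + 1))) :
    R * (27 * R - 1) * (d⁄dX ℚ) ((d⁄dX ℚ) R)
      = 6 * PowerSeries.X * ((d⁄dX ℚ) R) ^ 3 := by
  have hsubst : HasSubst R := .of_constantCoeff_zero' h0
  have hinv : omegaSeries.subst R = X := by
    ext m
    rw [coeff_omegaSeries_subst h0, hR m]
    rfl
  have h := derivative_derivative_of_subst_eq_X hsubst hinv omegaSeries_ode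
  simpa only [← coe_substAlgHom hsubst, map_mul, map_sub, map_ofNat, map_one,
    coe_substAlgHom, subst_X hsubst] using h
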